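/- Let k be a commutative ring, let A and B₀ be commutative k-algebras, and let B be a commutative ring equipped with ring homomorphisms A → B and B₀ → B compatible over k. For A-modules M and N there is a natural isomorphism of B₀-modules (M ⊗_k N) ⊗_{(A ⊗_k A)} (B ⊗_{B₀} B) ≅ (M ⊗_A B) ⊗_{B₀} (N ⊗_A B), where A ⊗_k A acts on B ⊗_{B₀} B through the map (a ⊗ a') ↦ (image of a) ⊗ (image of a'). -/

import Mathlib

open scoped TensorProduct

/-- For `k`-algebras `A₁, A₂` and modules `M₁` over `A₁`, `M₂` over `A₂`, the tensor product
`M₁ ⊗[k] M₂` is a module over `A₁ ⊗[k] A₂`, acting factorwise. -/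
noncomputable def tensorTensorModule (k A₁ A₂ M₁ M₂ : Type*) [CommRing k]
    [CommRing A₁] [CommRing A₂] [Algebra k A₁] [Algebra k A₂]
    [AddCommGroup M₁] [Module k M₁] [Module A₁ M₁] [IsScalarTower k A₁ M₁]
    [AddCommGroup M₂] [Module k M₂] [Module A₂ M₂] [IsScalarTower k A₂ M₂] :
    Module (A₁ ⊗[k] A₂) (M₁ ⊗[k] M₂) :=
  Module.compHom (M₁ ⊗[k] M₂)
    ((Module.endTensorEndAlgHom (R := k) (S := k) (A := k) (M := M₁) (N := M₂)).comp
      (Algebra.TensorProduct.map (Algebra.lsmul k k M₁) (Algebra.lsmul k k M₂))).toRingHom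

/-!
Both sides are additively generated by the pure tensors `(b ⊗ b') ⊗ (m ⊗ n)` and
`(b ⊗ m) ⊗ (b' ⊗ n)`, and the balancing relations correspond: `A ⊗ₖ A`-balancing on the left is
the pair of `A`-balancings on the right, `B₀`-balancing is the same relation on both sides, and
`k`-balancing of `m ⊗ n` holds on the right because `k` acts on `B` compatibly through `A` and
through `B₀`. So both maps can be defined on pure tensors, and they are inverse to each other on
generators.
-/

open TensorProduct

theorem tensorTensorModule_smul_tmul {k A₁ A₂ M₁ M₂ : Type*} [CommRing k]
    [CommRing A₁] [CommRing A₂] [Algebra k A₁] [Algebra k A₂]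
    [AddCommGroup M₁] [Module k M₁] [Module A₁ M₁] [IsScalarTower k A₁ M₁]
    [AddCommGroup M₂] [Module k M₂] [Module A₂ M₂] [IsScalarTower k A₂ M₂]
    (a₁ : A₁) (a₂ : A₂) (m₁ : M₁) (m₂ : M₂) :
    letI := tensorTensorModule k A₁ A₂ M₁ M₂
    (a₁ ⊗ₜ[k] a₂) • (m₁ ⊗ₜ[k] m₂) = (a₁ • m₁) ⊗ₜ (a₂ • m₂) :=
  rfl

def AddMonoidHom.mk₂ {M N P : Type*} [AddZeroClass M] [AddZeroClass N] [AddCommMonoid P]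
    (f : M → N → P) (zero_left : ∀ n, f 0 n = 0)
    (add_left : ∀ m m' n, f (m + m') n = f m n + f m' n) (zero_right : ∀ m, f m 0 = 0)
    (add_right : ∀ m n n', f m (n + n') = f m n + f m n') : M →+ N →+ P where
  toFun m := { toFun := f m, map_zero' := zero_right m, map_add' := add_right m }
  map_zero' := AddMonoidHom.ext zero_left
  map_add' m m' := AddMonoidHom.ext (add_left m m')

@[simp]
theorem AddMonoidHom.mk₂_apply {M N P : Type*} [AddZeroClass M] [AddZeroClass N]
    [AddCommMonoid P] (f : M → N → P) (h₁ h₂ h₃ h₄) (m : M) (n : N) :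
    AddMonoidHom.mk₂ f h₁ h₂ h₃ h₄ m n = f m n :=
  rfl

@[ext]
theorem TensorProduct.addMonoidHom_ext {R X Y P : Type*} [CommSemiring R] [AddCommMonoid X]
    [AddCommMonoid Y] [AddCommMonoid P] [Module R X] [Module R Y] {f g : X ⊗[R] Y →+ P}
    (h : ∀ x y, f (x ⊗ₜ y) = g (x ⊗ₜ y)) : f = g := by
  ext z
  induction z using TensorProduct.induction_on with
  | zero => simp only [map_zero]
  | tmul x y => exact h x y
  | add z z' hz hz' => simp only [map_add, hz, hz']

section

variable {R R₁ R₂ X₁ X₂ Y₁ Y₂ P : Type*} [CommSemiring R] [CommSemiring R₁] [CommSemiring R₂]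
  [AddCommMonoid X₁] [AddCommMonoid X₂] [AddCommMonoid Y₁] [AddCommMonoid Y₂] [AddCommMonoid P]
  [Module R₁ X₁] [Module R₁ X₂] [Module R₂ Y₁] [Module R₂ Y₂]

theorem TensorProduct.addMonoidHom_ext_tmul_tmul [Module R (X₁ ⊗[R₁] X₂)]
    [Module R (Y₁ ⊗[R₂] Y₂)] {f g : (X₁ ⊗[R₁] X₂) ⊗[R] (Y₁ ⊗[R₂] Y₂) →+ P}
    (h : ∀ x₁ x₂ y₁ y₂, f ((x₁ ⊗ₜ x₂) ⊗ₜ (y₁ ⊗ₜ y₂)) = g ((x₁ ⊗ₜ x₂) ⊗ₜ (y₁ ⊗ₜ y₂))) :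
    f = g := by
  ext x y
  induction x using TensorProduct.induction_on with
  | zero => simp only [zero_tmul, map_zero]
  | add x x' hx hx' => simp only [add_tmul, map_add, hx, hx']
  | tmul x₁ x₂ =>
    induction y using TensorProduct.induction_on with
    | zero => simp only [tmul_zero, map_zero]
    | add y y' hy hy' => simp only [tmul_add, map_add, hy, hy']
    | tmul y₁ y₂ => exact h x₁ x₂ y₁ y₂

theorem TensorProduct.balanced_of_tmul {S : Type*} [DistribSMul S (X₁ ⊗[R₁] X₂)]
    [DistribSMul S (Y₁ ⊗[R₂] Y₂)] (F : X₁ ⊗[R₁] X₂ →+ Y₁ ⊗[R₂] Y₂ →+ P) (c : S)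
    (h : ∀ x₁ x₂ y₁ y₂, F (c • (x₁ ⊗ₜ x₂)) (y₁ ⊗ₜ y₂) = F (x₁ ⊗ₜ x₂) (c • (y₁ ⊗ₜ y₂)))
    (x : X₁ ⊗[R₁] X₂) (y : Y₁ ⊗[R₂] Y₂) : F (c • x) y = F x (c • y) := by
  induction x using TensorProduct.induction_on with
  | zero => simp only [smul_zero, map_zero, AddMonoidHom.zero_apply]
  | add x x' hx hx' => simp only [smul_add, map_add, AddMonoidHom.add_apply, hx, hx']
  | tmul x₁ x₂ =>
    induction y using TensorProduct.induction_on with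
    | zero => simp only [smul_zero, map_zero]
    | add y y' hy hy' => simp only [smul_add, map_add, hy, hy']
    | tmul y₁ y₂ => exact h x₁ x₂ y₁ y₂

end

namespace TensorSquareBaseChange

variable {k A B₀ B M N : Type*} [CommRing k] [CommRing A] [CommRing B₀] [CommRing B]
  [Algebra k A] [Algebra A B] [Algebra B₀ B]
  [AddCommGroup M] [Module k M] [Module A M] [AddCommGroup N] [Module k N] [Module A N]

section

variable [Algebra k B₀] [Algebra k B] [IsScalarTower k A B] [IsScalarTower k B₀ B]
  [SMulCommClass A B₀ B] [IsScalarTower k A M] [IsScalarTower k A N]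

variable (B₀) in
theorem tmul_smul_eq_algebraMap_smul_tmul (c : k) (b : B) (m : M) :
    b ⊗ₜ[A] (c • m) = algebraMap k B₀ c • (b ⊗ₜ[A] m) := by
  rw [← algebraMap_smul A c m, ← smul_tmul, algebraMap_smul, ← algebraMap_smul B₀ c b,
    smul_tmul']

variable (k) in
noncomputable def forwardAux (b b' : B) : M ⊗[k] N →+ (B ⊗[A] M) ⊗[B₀] (B ⊗[A] N) :=
  liftAddHom
    (.mk₂ (fun m n => (b ⊗ₜ m) ⊗ₜ (b' ⊗ₜ n)) (by simp) (by simp [tmul_add, add_tmul]) (by simp)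
      (by simp [tmul_add]))
    fun c m n => by
      simp only [AddMonoidHom.mk₂_apply]
      rw [tmul_smul_eq_algebraMap_smul_tmul B₀, tmul_smul_eq_algebraMap_smul_tmul B₀, smul_tmul]

@[simp]
theorem forwardAux_tmul (b b' : B) (m : M) (n : N) :
    forwardAux k b b' (m ⊗ₜ n) = (b ⊗ₜ[A] m) ⊗ₜ[B₀] (b' ⊗ₜ[A] n) :=
  rfl

variable (k) in
noncomputable def forwardCurried : B ⊗[B₀] B →+ M ⊗[k] N →+ (B ⊗[A] M) ⊗[B₀] (B ⊗[A] N) :=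
  liftAddHom
    (.mk₂ (forwardAux k) (by intros; ext; simp) (by intros; ext; simp [add_tmul])
      (by intros; ext; simp) (by intros; ext; simp [add_tmul, tmul_add]))
    fun c b b' => by
      ext m n
      simp only [AddMonoidHom.mk₂_apply, forwardAux_tmul]
      rw [← smul_tmul', smul_tmul, smul_tmul']

@[simp]
theorem forwardCurried_tmul (b b' : B) (m : M) (n : N) :
    forwardCurried k (b ⊗ₜ[B₀] b') (m ⊗ₜ n) = (b ⊗ₜ[A] m) ⊗ₜ[B₀] (b' ⊗ₜ[A] n) :=
  rfl

end

variable [Module (A ⊗[k] A) (M ⊗[k] N)] [Module (A ⊗[k] A) (B ⊗[B₀] B)]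

theorem smul_tmul_smul_tmul_tmul
    (hMN : ∀ (a a' : A) (m : M) (n : N), (a ⊗ₜ[k] a') • (m ⊗ₜ[k] n) = (a • m) ⊗ₜ (a' • n))
    (hBB : ∀ (a a' : A) (b b' : B), (a ⊗ₜ[k] a') • (b ⊗ₜ[B₀] b') = (a • b) ⊗ₜ (a' • b'))
    (a a' : A) (b b' : B) (m : M) (n : N) :
    ((a • b) ⊗ₜ[B₀] (a' • b')) ⊗ₜ[A ⊗[k] A] (m ⊗ₜ[k] n) =
      (b ⊗ₜ b') ⊗ₜ[A ⊗[k] A] ((a • m) ⊗ₜ (a' • n)) := by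
  rw [← hBB, smul_tmul, hMN]

variable (hMN : ∀ (a a' : A) (m : M) (n : N), (a ⊗ₜ[k] a') • (m ⊗ₜ[k] n) = (a • m) ⊗ₜ (a' • n))
  (hBB : ∀ (a a' : A) (b b' : B), (a ⊗ₜ[k] a') • (b ⊗ₜ[B₀] b') = (a • b) ⊗ₜ (a' • b'))

noncomputable def backwardAux (b : B) (m : M) :
    B ⊗[A] N →+ (B ⊗[B₀] B) ⊗[A ⊗[k] A] (M ⊗[k] N) :=
  liftAddHom
    (.mk₂ (fun b' n => (b ⊗ₜ b') ⊗ₜ (m ⊗ₜ n)) (by simp) (by simp [tmul_add, add_tmul]) (by simp)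
      (by simp [tmul_add]))
    fun a b' n => by
      simpa only [AddMonoidHom.mk₂_apply, one_smul] using
        smul_tmul_smul_tmul_tmul hMN hBB 1 a b b' m n

@[simp]
theorem backwardAux_tmul (b b' : B) (m : M) (n : N) :
    backwardAux hMN hBB b m (b' ⊗ₜ n) = (b ⊗ₜ[B₀] b') ⊗ₜ[A ⊗[k] A] (m ⊗ₜ[k] n) :=
  rfl

noncomputable def backwardCurried :
    B ⊗[A] M →+ B ⊗[A] N →+ (B ⊗[B₀] B) ⊗[A ⊗[k] A] (M ⊗[k] N) :=
  liftAddHom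
    (.mk₂ (backwardAux hMN hBB) (by intros; ext; simp) (by intros; ext; simp [add_tmul])
      (by intros; ext; simp) (by intros; ext; simp [add_tmul, tmul_add]))
    fun a b m => by
      ext b' n
      simpa only [AddMonoidHom.mk₂_apply, backwardAux_tmul, one_smul] using
        smul_tmul_smul_tmul_tmul hMN hBB a 1 b b' m n

@[simp]
theorem backwardCurried_tmul (b b' : B) (m : M) (n : N) :
    backwardCurried hMN hBB (b ⊗ₜ m) (b' ⊗ₜ n) = (b ⊗ₜ[B₀] b') ⊗ₜ[A ⊗[k] A] (m ⊗ₜ[k] n) :=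
  rfl

variable [SMulCommClass A B₀ B]

noncomputable def backward :
    (B ⊗[A] M) ⊗[B₀] (B ⊗[A] N) →+ (B ⊗[B₀] B) ⊗[A ⊗[k] A] (M ⊗[k] N) :=
  liftAddHom (backwardCurried hMN hBB) fun c => balanced_of_tmul _ c fun b m b' n => by
    simp only [smul_tmul', backwardCurried_tmul, smul_tmul]

variable [Algebra k B₀] [Algebra k B] [IsScalarTower k A B] [IsScalarTower k B₀ B]
  [IsScalarTower k A M] [IsScalarTower k A N]

noncomputable def forward :
    (B ⊗[B₀] B) ⊗[A ⊗[k] A] (M ⊗[k] N) →+ (B ⊗[A] M) ⊗[B₀] (B ⊗[A] N) :=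
  liftAddHom (forwardCurried k) fun r x y => by
    induction r using TensorProduct.induction_on with
    | zero => simp only [zero_smul, map_zero, AddMonoidHom.zero_apply]
    | add r r' hr hr' => simp only [add_smul, map_add, AddMonoidHom.add_apply, hr, hr']
    | tmul a a' =>
      refine balanced_of_tmul _ _ (fun b b' m n => ?_) x y
      simp only [hBB, hMN, forwardCurried_tmul, smul_tmul]

@[simp]
theorem forward_tmul (b b' : B) (m : M) (n : N) :
    forward hMN hBB ((b ⊗ₜ b') ⊗ₜ (m ⊗ₜ n)) =
      (b ⊗ₜ[A] m) ⊗ₜ[B₀] (b' ⊗ₜ[A] n) :=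
  rfl

theorem forward_smul [SMulCommClass (A ⊗[k] A) B₀ (B ⊗[B₀] B)] (c : B₀)
    (x : (B ⊗[B₀] B) ⊗[A ⊗[k] A] (M ⊗[k] N)) :
    forward hMN hBB (c • x) = c • forward hMN hBB x := by
  have : (forward hMN hBB).comp (DistribSMul.toAddMonoidHom _ c) =
      (DistribSMul.toAddMonoidHom _ c).comp (forward hMN hBB) :=
    addMonoidHom_ext_tmul_tmul fun b b' m n => by
      simp only [AddMonoidHom.comp_apply, DistribSMul.toAddMonoidHom_apply, smul_tmul', forward_tmul]
  exact DFunLike.congr_fun this x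

theorem backward_comp_forward :
    (backward hMN hBB).comp (forward hMN hBB) = .id _ :=
  addMonoidHom_ext_tmul_tmul fun _ _ _ _ => rfl

theorem forward_comp_backward :
    (forward hMN hBB).comp (backward hMN hBB) = .id _ :=
  addMonoidHom_ext_tmul_tmul fun _ _ _ _ => rfl

noncomputable def linearEquiv [SMulCommClass (A ⊗[k] A) B₀ (B ⊗[B₀] B)] :
    (B ⊗[B₀] B) ⊗[A ⊗[k] A] (M ⊗[k] N) ≃ₗ[B₀] (B ⊗[A] M) ⊗[B₀] (B ⊗[A] N) where
  __ := forward hMN hBB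
  map_smul' := forward_smul hMN hBB
  invFun := backward hMN hBB
  left_inv := DFunLike.congr_fun (backward_comp_forward hMN hBB)
  right_inv := DFunLike.congr_fun (forward_comp_backward hMN hBB)

theorem exists_linearEquiv [SMulCommClass (A ⊗[k] A) B₀ (B ⊗[B₀] B)]
    (hMN : ∀ (a a' : A) (m : M) (n : N), (a ⊗ₜ[k] a') • (m ⊗ₜ[k] n) = (a • m) ⊗ₜ (a' • n))
    (hBB : ∀ (a a' : A) (b b' : B), (a ⊗ₜ[k] a') • (b ⊗ₜ[B₀] b') = (a • b) ⊗ₜ (a' • b')) :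
    ∃ e : (B ⊗[B₀] B) ⊗[A ⊗[k] A] (M ⊗[k] N) ≃ₗ[B₀] (B ⊗[A] M) ⊗[B₀] (B ⊗[A] N),
      ∀ (b b' : B) (m : M) (n : N),
        e ((b ⊗ₜ[B₀] b') ⊗ₜ[A ⊗[k] A] (m ⊗ₜ[k] n)) = (b ⊗ₜ[A] m) ⊗ₜ[B₀] (b' ⊗ₜ[A] n) :=
  ⟨linearEquiv hMN hBB, fun _ _ _ _ => rfl⟩

end TensorSquareBaseChange

/-- Base-change comparison for factorization homology (pointwise form): for `k`-algebras
`A`, `B₀`, `B` with compatible maps `A → B`, `B₀ → B`, and `A`-modules `M`, `N`, one has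
`(M ⊗ₖ N) ⊗_{A ⊗ₖ A} (B ⊗_{B₀} B) ≅ (M ⊗_A B) ⊗_{B₀} (N ⊗_A B)` as `B₀`-modules, where
`A ⊗ₖ A` acts on `B ⊗_{B₀} B` through the two maps `A → B`. -/
theorem tensor_square_base_change
    (k A B₀ B M N : Type*) [CommRing k] [CommRing A] [CommRing B₀] [CommRing B]
    [Algebra k A] [Algebra k B₀] [Algebra k B] [Algebra A B] [Algebra B₀ B]
    [IsScalarTower k A B] [IsScalarTower k B₀ B]
    [AddCommGroup M] [Module k M] [Module A M] [IsScalarTower k A M]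
    [AddCommGroup N] [Module k N] [Module A N] [IsScalarTower k A N] :
    letI : Module (A ⊗[k] A) (M ⊗[k] N) := tensorTensorModule k A A M N
    letI : Algebra (A ⊗[k] A) (B ⊗[B₀] B) :=
      (Algebra.TensorProduct.productMap
        (((Algebra.TensorProduct.includeLeft :
            B →ₐ[B₀] B ⊗[B₀] B).restrictScalars k).comp (IsScalarTower.toAlgHom k A B))
        (((Algebra.TensorProduct.includeRight :
            B →ₐ[B₀] B ⊗[B₀] B).restrictScalars k).comp
          (IsScalarTower.toAlgHom k A B))).toRingHom.toAlgebra
    letI : SMulCommClass (A ⊗[k] A) B₀ (B ⊗[B₀] B) :=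
      ⟨fun r s x => by simp only [Algebra.smul_def]; exact mul_left_comm _ _ _⟩
    letI : SMulCommClass A B₀ B :=
      ⟨fun r s x => by simp only [Algebra.smul_def]; exact mul_left_comm _ _ _⟩
    ∃ e : ((B ⊗[B₀] B) ⊗[A ⊗[k] A] (M ⊗[k] N)) ≃ₗ[B₀]
        ((B ⊗[A] M) ⊗[B₀] (B ⊗[A] N)),
      ∀ (b b' : B) (m : M) (n : N),
        e ((b ⊗ₜ[B₀] b') ⊗ₜ[A ⊗[k] A] (m ⊗ₜ[k] n)) =
          (b ⊗ₜ[A] m) ⊗ₜ[B₀] (b' ⊗ₜ[A] n) := by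
  -- the instances are the `letI`s of the statement, which are not in the local context
  apply (config := { synthAssignedInstances := false }) TensorSquareBaseChange.exists_linearEquiv
  · exact tensorTensorModule_smul_tmul
  · intro a a' b b'
    simp [Algebra.smul_def, RingHom.algebraMap_toAlgebra, Algebra.TensorProduct.tmul_mul_tmul]
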